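/- Let V, W be linearly independent Orlicz functions with liminf_{x→∞} V(x)/W(x) > 0, R > 0, and m as above. Then there exists ε > 0 such that for every t ∈ (m−ε, m) there is a pair (α,β) ∈ (−∞,0)² with ∇φ(α,β) = (R, t), where φ(α,β) = log ∫_ℝ e^{αV(x)+βW(x)} dx. -/

import Mathlib

/-!
The gradient `∇φ = (E[V], E[W])` is strictly monotone:
`⟨θ₂ - θ₁, ∇φ θ₂ - ∇φ θ₁⟩ > 0` unless `(θ₂ - θ₁) · (V, W)` is constant, which linear independence
excludes. Moreover `E_{μ_{α,β}}[V] → 0` as `α → -∞`. So for `β ≤ 0` close to `0` there is a unique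
`α = g β < 0` with `E_{μ_{α,β}}[V] = R`, and `g` is continuous since `E[V]` is continuous and
strictly increasing in `α`. Along the curve `β ↦ (g β, β)` the mean of `W` is continuous, equals
`m` at `β = 0` and, by monotonicity of `∇φ`, is strictly smaller than `m` for `β < 0`; the
intermediate value theorem yields every value slightly below `m`.
-/

open MeasureTheory Filter Real Set Topology

theorem integrable_exp_neg_mul_abs {b : ℝ} (hb : 0 < b) :
    Integrable (fun x : ℝ => exp (-b * |x|)) := by
  refine LocallyIntegrable.integrable_of_isBigO_atTop_of_norm_isNegInvariant
    (by fun_prop : Continuous fun x : ℝ => exp (-b * |x|)).locallyIntegrable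
    (ae_of_all _ fun x => by simp) ?_ ⟨Ioi 0, Ioi_mem_atTop 0, exp_neg_integrableOn_Ioi 0 hb⟩
  exact EventuallyEq.isBigO (eventually_ge_atTop 0 |>.mono fun x hx => by simp [abs_of_nonneg hx])

theorem one_add_mul_exp_le {a y : ℝ} (ha : a < 0) (hy : 0 ≤ y) :
    (1 + y) * exp (a * y) ≤ (1 - 2 / a) * exp (a / 2 * y) := by
  set E := exp (a / 2 * y)
  have hE : 0 < E := exp_pos _
  have hE1 : E ≤ 1 := exp_le_one_iff.2 (by nlinarith)
  have hsq : exp (a * y) = E * E := by rw [← exp_add]; ring_nf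
  have hyE : y * E ≤ -2 / a := by
    have hinv : exp (-(a / 2) * y) * E = 1 := by rw [← exp_add, neg_mul, neg_add_cancel, exp_zero]
    rw [le_div_iff_of_neg ha]
    nlinarith [add_one_le_exp (-(a / 2) * y)]
  rw [hsq]
  linear_combination mul_le_mul_of_nonneg_right hyE hE.le + mul_le_mul_of_nonneg_right hE1 hE.le

theorem mul_exp_le_add {a v w y : ℝ} (ha : a + 1 ≤ 0) (hv : 0 ≤ v) (hw : w ≤ 0) (hy : 0 ≤ y) :
    y * exp (a * y + w) ≤ v * exp (a * y + w) + exp ((a + 1) * v) * (y * exp (-y)) := by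
  rcases le_or_gt y v with hyv | hvy
  · have := mul_le_mul_of_nonneg_right hyv (exp_pos (a * y + w)).le
    have : 0 ≤ exp ((a + 1) * v) * (y * exp (-y)) := by positivity
    linarith
  · have : exp (a * y + w) ≤ exp ((a + 1) * v) * exp (-y) := by
      rw [← exp_add]; exact exp_le_exp.2 (by nlinarith)
    nlinarith [exp_pos (a * y + w), mul_le_mul_of_nonneg_left this hy]

theorem exp_sub_exp_mul_sub_pos {y z : ℝ} (h : y ≠ z) : 0 < (exp y - exp z) * (y - z) := by
  rcases h.lt_or_gt with h | h
  · exact mul_pos_of_neg_of_neg (sub_neg.2 (exp_lt_exp.2 h)) (sub_neg.2 h)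
  · exact mul_pos (sub_pos.2 (exp_lt_exp.2 h)) (sub_pos.2 h)

theorem exp_sub_exp_mul_sub_nonneg (y z : ℝ) : 0 ≤ (exp y - exp z) * (y - z) := by
  rcases eq_or_ne y z with rfl | h
  · simp
  · exact (exp_sub_exp_mul_sub_pos h).le

theorem integral_pos_of_forall_pos {Ω : Type*} [MeasurableSpace Ω] {μ : Measure Ω} [NeZero μ]
    {r : Ω → ℝ} (hr : ∀ x, 0 < r x) (hri : Integrable r μ) : 0 < ∫ x, r x ∂μ := by
  rw [integral_pos_iff_support_of_nonneg (fun x => (hr x).le) hri,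
    Function.support_eq_univ fun x => (hr x).ne']
  exact Measure.measure_univ_pos.2 (NeZero.ne μ)

theorem integral_mul_div_lt_of_eq_mul_exp {Ω : Type*} [MeasurableSpace Ω] {μ : Measure Ω}
    {p q u : Ω → ℝ} (hq : ∀ x, 0 < q x) (hpq : ∀ x, p x = q x * exp (u x))
    (hqi : Integrable q μ) (hpi : Integrable p μ) (hqu : Integrable (fun x => u x * q x) μ)
    (hpu : Integrable (fun x => u x * p x) μ) (hu : ∀ c, ¬ u =ᵐ[μ] fun _ => c) :
    (∫ x, u x * q x ∂μ) / ∫ x, q x ∂μ < (∫ x, u x * p x ∂μ) / ∫ x, p x ∂μ := by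
  have hp : ∀ x, 0 < p x := fun x => hpq x ▸ mul_pos (hq x) (exp_pos _)
  have : NeZero μ := ⟨fun h => hu 0 (by rw [h, ae_zero]; exact eventually_bot)⟩
  have hZq := integral_pos_of_forall_pos hq hqi
  have hZp := integral_pos_of_forall_pos hp hpi
  set k := (∫ x, p x ∂μ) / ∫ x, q x ∂μ
  set L := log k
  have hkL : exp L = k := exp_log (div_pos hZp hZq)
  -- `g ≥ 0` by monotonicity of `exp`, and the choice of `L` makes `∫ g` a multiple of the
  -- difference of the two means.
  set g : Ω → ℝ := fun x => q x * ((exp (u x) - exp L) * (u x - L))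
  have hg : g = fun x => u x * p x - k * (u x * q x) - L * p x + k * L * q x := by
    ext x; simp only [g, hpq, hkL]; ring
  have hgi : Integrable g μ := by
    rw [hg]; exact (((hpu.sub (hqu.const_mul k)).sub (hpi.const_mul L)).add (hqi.const_mul _))
  have hg_pos : 0 < ∫ x, g x ∂μ := by
    rw [integral_pos_iff_support_of_nonneg
      (fun x => mul_nonneg (hq x).le (exp_sub_exp_mul_sub_nonneg _ _)) hgi]
    have : Function.support g = {x | ¬ u x = L} := by
      ext x
      refine ⟨fun hgx hux => hgx (by simp [g, hux]), fun hux => ?_⟩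
      exact (mul_pos (hq x) (exp_sub_exp_mul_sub_pos hux)).ne'
    rw [this, pos_iff_ne_zero]
    exact fun h => hu L (ae_iff.2 h)
  have hg_eq : ∫ x, g x ∂μ = (∫ x, u x * p x ∂μ) - k * ∫ x, u x * q x ∂μ := by
    rw [hg, integral_add, integral_sub, integral_sub]
    · simp only [integral_const_mul, k]
      field_simp
      ring
    all_goals fun_prop
  have := mul_pos hZq (hg_eq ▸ hg_pos)
  rw [div_lt_div_iff₀ hZq hZp]
  simp only [k] at this
  field_simp at this
  linarith

theorem continuousWithinAt_of_strictMonoOn_of_eq {F : ℝ → ℝ → ℝ} {g : ℝ → ℝ} {s : Set ℝ}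
    {c R b₀ : ℝ} (hmono : ∀ b ∈ s, StrictMonoOn (F · b) (Iio c))
    (hcont : ∀ a < c, ContinuousWithinAt (F a) s b₀)
    (hg : ∀ b ∈ s, g b < c ∧ F (g b) b = R) (hb₀ : b₀ ∈ s) :
    ContinuousWithinAt g s b₀ := by
  obtain ⟨hgc₀, hF₀⟩ := hg b₀ hb₀
  refine tendsto_order.2 ⟨fun a ha => ?_, fun a ha => ?_⟩
  · have hac : a < c := ha.trans hgc₀
    have hFa : F a b₀ < R := hF₀ ▸ hmono b₀ hb₀ hac hgc₀ ha
    filter_upwards [(hcont a hac).eventually (gt_mem_nhds hFa), self_mem_nhdsWithin]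
      with b hb hbs
    obtain ⟨hgc, hFb⟩ := hg b hbs
    exact ((hmono b hbs).lt_iff_lt hac hgc).1 (hFb ▸ hb)
  · rcases le_or_gt c a with hca | hac
    · filter_upwards [self_mem_nhdsWithin] with b hbs using (hg b hbs).1.trans_le hca
    have hFa : R < F a b₀ := hF₀ ▸ hmono b₀ hb₀ hgc₀ hac ha
    filter_upwards [(hcont a hac).eventually (lt_mem_nhds hFa), self_mem_nhdsWithin]
      with b hb hbs
    obtain ⟨hgc, hFb⟩ := hg b hbs
    exact ((hmono b hbs).lt_iff_lt hgc hac).1 (hFb ▸ hb)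

theorem exists_continuousOn_of_strictMonoOn_of_eq {F : ℝ → ℝ → ℝ} {s : Set ℝ} {c R : ℝ}
    (hmono : ∀ b ∈ s, StrictMonoOn (F · b) (Iio c))
    (hcontA : ∀ b ∈ s, ContinuousOn (F · b) (Iio c))
    (hcontB : ∀ a < c, ContinuousOn (F a) s)
    (hlow : ∀ b ∈ s, ∃ a < c, F a b < R) (hupp : ∀ b ∈ s, ∃ a < c, R < F a b) :
    ∃ g : ℝ → ℝ, (∀ b ∈ s, g b < c ∧ F (g b) b = R) ∧ ContinuousOn g s := by
  have : ∀ b ∈ s, ∃ a, a < c ∧ F a b = R := by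
    intro b hb
    obtain ⟨a₀, ha₀, hlo⟩ := hlow b hb
    obtain ⟨a₁, ha₁, hhi⟩ := hupp b hb
    have hle : a₀ ≤ a₁ := (((hmono b hb).lt_iff_lt ha₀ ha₁).1 (hlo.trans hhi)).le
    obtain ⟨a, ha, hFa⟩ := intermediate_value_Icc hle
      ((hcontA b hb).mono fun x hx => hx.2.trans_lt ha₁) ⟨hlo.le, hhi.le⟩
    exact ⟨a, ha.2.trans_lt ha₁, hFa⟩
  choose! g hg using this
  exact ⟨g, hg, fun b hb =>
    continuousWithinAt_of_strictMonoOn_of_eq hmono (fun a ha => hcontB a ha b hb) hg hb⟩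

structure IsOrlicz (V : ℝ → ℝ) : Prop where
  symm : ∀ x, V (-x) = V x
  convexOn : ConvexOn ℝ univ V
  nonneg : ∀ x, 0 ≤ V x
  eq_zero_iff : ∀ x, V x = 0 ↔ x = 0

namespace IsOrlicz

variable {V : ℝ → ℝ}

theorem continuous (hV : IsOrlicz V) : Continuous V :=
  continuousOn_univ.1 (hV.convexOn.continuousOn isOpen_univ)

theorem apply_zero (hV : IsOrlicz V) : V 0 = 0 := (hV.eq_zero_iff 0).2 rfl

theorem apply_one_pos (hV : IsOrlicz V) : 0 < V 1 :=
  (hV.nonneg 1).lt_of_ne fun h => one_ne_zero ((hV.eq_zero_iff 1).1 h.symm)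

theorem apply_abs (hV : IsOrlicz V) (x : ℝ) : V |x| = V x := by
  rcases abs_choice x with h | h <;> rw [h]
  exact hV.symm x

theorem mul_apply_le_mul_apply (hV : IsOrlicz V) {x y : ℝ} (hx : 0 ≤ x) (hxy : x ≤ y) :
    y * V x ≤ x * V y := by
  rcases hx.eq_or_lt with rfl | hx
  · simp [hV.apply_zero]
  have hy := hx.trans_le hxy
  have := hV.convexOn.secant_mono (mem_univ 0) (mem_univ x) (mem_univ y) hx.ne' hy.ne' hxy
  rw [hV.apply_zero, sub_zero, sub_zero, sub_zero, sub_zero, div_le_div_iff₀ hx hy] at this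
  linarith

theorem apply_le_of_abs_le (hV : IsOrlicz V) {x y : ℝ} (hxy : |x| ≤ |y|) : V x ≤ V y := by
  rw [← hV.apply_abs x, ← hV.apply_abs y]
  rcases (abs_nonneg y).eq_or_lt with hy | hy
  · rw [← hy, le_antisymm (hy ▸ hxy) (abs_nonneg x)]
  · have := hV.mul_apply_le_mul_apply (abs_nonneg x) hxy
    nlinarith [hV.nonneg |y|]

theorem mul_abs_sub_one_le (hV : IsOrlicz V) (x : ℝ) : V 1 * (|x| - 1) ≤ V x := by
  rcases le_or_gt 1 |x| with hx | hx
  · have := hV.mul_apply_le_mul_apply zero_le_one hx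
    rw [hV.apply_abs, one_mul] at this
    nlinarith [hV.apply_one_pos]
  · nlinarith [hV.apply_one_pos, hV.nonneg x]

theorem exists_le_mul_one_add_of_liminf_pos {W : ℝ → ℝ} (hV : IsOrlicz V) (hW : IsOrlicz W)
    (h : 0 < liminf (fun x => V x / W x) atTop) : ∃ C, ∀ x, W x ≤ C * (1 + V x) := by
  have hbdd : IsBoundedUnder (· ≥ ·) atTop (fun x => V x / W x) :=
    isBoundedUnder_of_eventually_ge (.of_forall fun x => div_nonneg (hV.nonneg x) (hW.nonneg x))
  obtain ⟨N, hN⟩ := eventually_atTop.1 (eventually_lt_of_lt_liminf (half_lt_self h) hbdd)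
  set l := liminf (fun x => V x / W x) atTop
  set N' := max N 1
  have hN' : 0 < N' := lt_max_of_lt_right one_pos
  set C := max (2 / l) (W N')
  have hC : 0 ≤ C := (hW.nonneg N').trans (le_max_right _ _)
  refine ⟨C, fun x => ?_⟩
  rcases le_or_gt N' |x| with hx | hx
  · have hWx : 0 < W |x| := (hW.nonneg _).lt_of_ne fun h0 =>
      (hN'.trans_le hx).ne' ((hW.eq_zero_iff _).1 h0.symm)
    have := hN |x| ((le_max_left N 1).trans hx)
    rw [lt_div_iff₀ hWx, hW.apply_abs, hV.apply_abs] at this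
    calc W x ≤ 2 / l * V x := by rw [div_mul_eq_mul_div, le_div_iff₀ h]; linarith
      _ ≤ C * (1 + V x) := by nlinarith [le_max_left (2 / l) (W N'), hV.nonneg x]
  · calc W x ≤ W N' := hW.apply_le_of_abs_le (by rw [abs_of_pos hN']; exact hx.le)
      _ ≤ C := le_max_right _ _
      _ ≤ C * (1 + V x) := le_mul_of_one_le_right hC (by linarith [hV.nonneg x])

theorem integrable_exp_mul (hV : IsOrlicz V) {a : ℝ} (ha : a < 0) :
    Integrable (fun x => exp (a * V x)) := by
  have hk : 0 < -(a * V 1) := by nlinarith [hV.apply_one_pos]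
  have := hV.continuous
  refine ((integrable_exp_neg_mul_abs hk).const_mul (exp (-(a * V 1)))).mono'
    (by fun_prop) (ae_of_all _ fun x => ?_)
  rw [norm_of_nonneg (exp_pos _).le, ← exp_add]
  exact exp_le_exp.2 (by nlinarith [mul_le_mul_of_nonpos_left (hV.mul_abs_sub_one_le x) ha.le])

theorem integrable_one_add_mul_exp_mul (hV : IsOrlicz V) {a : ℝ} (ha : a < 0) :
    Integrable (fun x => (1 + V x) * exp (a * V x)) := by
  have := hV.continuous
  refine ((hV.integrable_exp_mul (by linarith : a / 2 < 0)).const_mul (1 - 2 / a)).mono'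
    (by fun_prop) (ae_of_all _ fun x => ?_)
  rw [norm_of_nonneg (by positivity [hV.nonneg x])]
  exact one_add_mul_exp_le ha (hV.nonneg x)

end IsOrlicz

/-- `E_{μ_{α,β}}[f]`. -/
noncomputable def gibbsMean (V W f : ℝ → ℝ) (α β : ℝ) : ℝ :=
  (∫ x, f x * exp (α * V x + β * W x)) / ∫ x, exp (α * V x + β * W x)

section GibbsMean

variable {V W f : ℝ → ℝ} {C a b : ℝ}

theorem norm_mul_exp_le (hV₀ : ∀ x, 0 ≤ V x) (hW₀ : ∀ x, 0 ≤ W x)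
    (hfC : ∀ x, |f x| ≤ C * (1 + V x)) {a' : ℝ} (ha : a ≤ a') (hb : b ≤ 0) (x : ℝ) :
    ‖f x * exp (a * V x + b * W x)‖ ≤ C * ((1 + V x) * exp (a' * V x)) := by
  rw [norm_mul, norm_of_nonneg (exp_pos _).le, Real.norm_eq_abs, ← mul_assoc]
  refine mul_le_mul (hfC x) (exp_le_exp.2 ?_) (exp_pos _).le ((abs_nonneg _).trans (hfC x))
  linarith [mul_le_mul_of_nonneg_right ha (hV₀ x), mul_nonpos_of_nonpos_of_nonneg hb (hW₀ x)]

theorem integrable_mul_exp (hV : IsOrlicz V) (hWc : Continuous W) (hW₀ : ∀ x, 0 ≤ W x)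
    (hf : Continuous f) (hfC : ∀ x, |f x| ≤ C * (1 + V x)) (ha : a < 0) (hb : b ≤ 0) :
    Integrable (fun x => f x * exp (a * V x + b * W x)) := by
  have := hV.continuous
  exact ((hV.integrable_one_add_mul_exp_mul ha).const_mul C).mono' (by fun_prop)
    (ae_of_all _ (norm_mul_exp_le hV.nonneg hW₀ hfC le_rfl hb))

theorem integrable_exp_mul_add (hV : IsOrlicz V) (hWc : Continuous W) (hW₀ : ∀ x, 0 ≤ W x)
    (ha : a < 0) (hb : b ≤ 0) : Integrable (fun x => exp (a * V x + b * W x)) := by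
  simpa using integrable_mul_exp hV hWc hW₀ continuous_const (f := fun _ => 1) (C := 1)
    (fun x => by simp [hV.nonneg x]) ha hb

theorem integral_exp_mul_add_pos (hV : IsOrlicz V) (hWc : Continuous W) (hW₀ : ∀ x, 0 ≤ W x)
    (ha : a < 0) (hb : b ≤ 0) : 0 < ∫ x, exp (a * V x + b * W x) :=
  integral_exp_pos (integrable_exp_mul_add hV hWc hW₀ ha hb)

theorem continuousOn_integral_mul_exp (hV : IsOrlicz V) (hWc : Continuous W)
    (hW₀ : ∀ x, 0 ≤ W x) (hf : Continuous f) (hfC : ∀ x, |f x| ≤ C * (1 + V x)) :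
    ContinuousOn (fun p : ℝ × ℝ => ∫ x, f x * exp (p.1 * V x + p.2 * W x)) (Iio 0 ×ˢ Iic 0) := by
  intro p hp
  have hVc := hV.continuous
  have hp₁ : p.1 < p.1 / 2 := by linarith [hp.1.out]
  refine tendsto_integral_filter_of_dominated_convergence _
    (.of_forall fun q => (by fun_prop : Continuous _).aestronglyMeasurable) ?_
    ((hV.integrable_one_add_mul_exp_mul (by linarith : p.1 / 2 < 0)).const_mul C)
    (ae_of_all _ fun x => ?_)
  · filter_upwards [self_mem_nhdsWithin,
      nhdsWithin_le_nhds ((continuous_fst.tendsto p).eventually (gt_mem_nhds hp₁))] with q hq hq₁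
    exact ae_of_all _ (norm_mul_exp_le hV.nonneg hW₀ hfC hq₁.le hq.2)
  · exact ((by fun_prop : Continuous fun q : ℝ × ℝ => f x * exp (q.1 * V x + q.2 * W x)).tendsto
      p).mono_left nhdsWithin_le_nhds

theorem continuousOn_gibbsMean (hV : IsOrlicz V) (hWc : Continuous W) (hW₀ : ∀ x, 0 ≤ W x)
    (hf : Continuous f) (hfC : ∀ x, |f x| ≤ C * (1 + V x)) :
    ContinuousOn (fun p : ℝ × ℝ => gibbsMean V W f p.1 p.2) (Iio 0 ×ˢ Iic 0) := by
  refine (continuousOn_integral_mul_exp hV hWc hW₀ hf hfC).div ?_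
    fun p hp => (integral_exp_mul_add_pos hV hWc hW₀ hp.1 hp.2).ne'
  simpa using continuousOn_integral_mul_exp hV hWc hW₀ continuous_const (f := fun _ => 1) (C := 1)
    (fun x => by simp [hV.nonneg x])

theorem gibbsMean_add_mul {g : ℝ → ℝ} (hf : Integrable (fun x => f x * exp (a * V x + b * W x)))
    (hg : Integrable (fun x => g x * exp (a * V x + b * W x))) (c d : ℝ) :
    gibbsMean V W (fun x => c * f x + d * g x) a b =
      c * gibbsMean V W f a b + d * gibbsMean V W g a b := by
  simp only [gibbsMean, add_mul, mul_assoc]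
  rw [integral_add (hf.const_mul c) (hg.const_mul d), integral_const_mul, integral_const_mul]
  ring

theorem linComb_gibbsMean_lt (hV : IsOrlicz V) (hWc : Continuous W) (hW₀ : ∀ x, 0 ≤ W x)
    (hWC : ∀ x, W x ≤ C * (1 + V x)) {a₁ b₁ a₂ b₂ : ℝ} (ha₁ : a₁ < 0) (hb₁ : b₁ ≤ 0)
    (ha₂ : a₂ < 0) (hb₂ : b₂ ≤ 0) (hu : ¬ ∃ c, ∀ x, (a₂ - a₁) * V x + (b₂ - b₁) * W x = c) :
    (a₂ - a₁) * gibbsMean V W V a₁ b₁ + (b₂ - b₁) * gibbsMean V W W a₁ b₁ <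
      (a₂ - a₁) * gibbsMean V W V a₂ b₂ + (b₂ - b₁) * gibbsMean V W W a₂ b₂ := by
  have hVi {a b : ℝ} (ha : a < 0) (hb : b ≤ 0) :=
    integrable_mul_exp hV hWc hW₀ hV.continuous (C := 1)
      (fun x => by simp [abs_of_nonneg (hV.nonneg x)]) ha hb
  have hWi {a b : ℝ} (ha : a < 0) (hb : b ≤ 0) :=
    integrable_mul_exp hV hWc hW₀ hWc (fun x => (abs_of_nonneg (hW₀ x)).trans_le (hWC x)) ha hb
  have hui {a b : ℝ} (ha : a < 0) (hb : b ≤ 0) :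
      Integrable (fun x => ((a₂ - a₁) * V x + (b₂ - b₁) * W x) * exp (a * V x + b * W x)) := by
    refine (((hVi ha hb).const_mul (a₂ - a₁)).add ((hWi ha hb).const_mul (b₂ - b₁))).congr
      (ae_of_all _ fun x => ?_)
    simp only [Pi.add_apply]
    ring
  rw [← gibbsMean_add_mul (hVi ha₁ hb₁) (hWi ha₁ hb₁),
    ← gibbsMean_add_mul (hVi ha₂ hb₂) (hWi ha₂ hb₂)]
  refine integral_mul_div_lt_of_eq_mul_exp (fun x => exp_pos _) (fun x => ?_)
    (integrable_exp_mul_add hV hWc hW₀ ha₁ hb₁) (integrable_exp_mul_add hV hWc hW₀ ha₂ hb₂)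
    (hui ha₁ hb₁) (hui ha₂ hb₂) fun c hc => hu ⟨c, fun x => ?_⟩
  · rw [← exp_add]; ring_nf
  · have := hV.continuous
    exact congr_fun ((Continuous.ae_eq_iff_eq volume (by fun_prop) continuous_const).1 hc) x

theorem gibbsMean_self_nonneg (hV₀ : ∀ x, 0 ≤ V x) : 0 ≤ gibbsMean V W V a b :=
  div_nonneg (integral_nonneg fun x => mul_nonneg (hV₀ x) (exp_pos _).le)
    (integral_nonneg fun _ => (exp_pos _).le)

theorem mul_exp_le_integral_exp (hV : IsOrlicz V) (hW : IsOrlicz W) (ha : a < 0) (hb : b ≤ 0)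
    {r : ℝ} (hr : 0 ≤ r) : 2 * r * exp (a * V r + b * W r) ≤ ∫ x, exp (a * V x + b * W x) := by
  have hint := integrable_exp_mul_add hV hW.continuous hW.nonneg ha hb
  calc 2 * r * exp (a * V r + b * W r)
      = exp (a * V r + b * W r) * volume.real (Icc (-r) r) := by
        rw [volume_real_Icc_of_le (by linarith)]; ring
    _ ≤ ∫ x in Icc (-r) r, exp (a * V x + b * W x) := by
        refine setIntegral_ge_of_const_le_real measurableSet_Icc measure_Icc_lt_top.ne
          (fun x hx => exp_le_exp.2 ?_) hint.integrableOn
        have hxr : |x| ≤ |r| := by rw [abs_of_nonneg hr]; exact abs_le.2 hx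
        nlinarith [hV.apply_le_of_abs_le hxr, hW.apply_le_of_abs_le hxr]
    _ ≤ ∫ x, exp (a * V x + b * W x) :=
        setIntegral_le_integral hint (.of_forall fun x => (exp_pos _).le)

theorem gibbsMean_self_le (hV : IsOrlicz V) (hW : IsOrlicz W) (ha : a ≤ -1) (hb : b ≤ 0)
    {r v : ℝ} (hr : 0 < r) (hv : 0 ≤ v) :
    gibbsMean V W V a b ≤
      v + (∫ x, V x * exp (-V x)) / (2 * r) * exp (a * (v - V r) + (v - b * W r)) := by
  have hZ := mul_exp_le_integral_exp hV hW (by linarith : a < 0) hb hr.le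
  have hZpos : 0 < 2 * r * exp (a * V r + b * W r) := by positivity
  set K := ∫ x, V x * exp (-V x)
  have hK : 0 ≤ K := integral_nonneg fun x => mul_nonneg (hV.nonneg x) (exp_pos _).le
  have hZi := integrable_exp_mul_add hV hW.continuous hW.nonneg (by linarith : a < 0) hb
  have hKi : Integrable (fun x => V x * exp (-V x)) := by
    simpa using integrable_mul_exp hV hW.continuous hW.nonneg hV.continuous (C := 1)
      (fun x => by simp [abs_of_nonneg (hV.nonneg x)]) (neg_one_lt_zero) le_rfl
  have hN : ∫ x, V x * exp (a * V x + b * W x) ≤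
      v * (∫ x, exp (a * V x + b * W x)) + exp ((a + 1) * v) * K := by
    rw [← integral_const_mul, ← integral_const_mul, ← integral_add (hZi.const_mul v)
      (hKi.const_mul _)]
    refine integral_mono (integrable_mul_exp hV hW.continuous hW.nonneg hV.continuous (C := 1)
      (fun x => by simp [abs_of_nonneg (hV.nonneg x)]) (by linarith) hb)
      ((hZi.const_mul v).add (hKi.const_mul _)) fun x => ?_
    exact mul_exp_le_add (by linarith) hv (mul_nonpos_of_nonpos_of_nonneg hb (hW.nonneg x))
      (hV.nonneg x)
  rw [gibbsMean, div_le_iff₀ (hZpos.trans_le hZ)]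
  calc ∫ x, V x * exp (a * V x + b * W x)
      ≤ v * (∫ x, exp (a * V x + b * W x)) + exp ((a + 1) * v) * K := hN
    _ = v * (∫ x, exp (a * V x + b * W x)) + K / (2 * r) *
          exp (a * (v - V r) + (v - b * W r)) * (2 * r * exp (a * V r + b * W r)) := by
        field_simp
        rw [mul_assoc K, ← exp_add]
        ring_nf
    _ ≤ v * (∫ x, exp (a * V x + b * W x)) + K / (2 * r) *
          exp (a * (v - V r) + (v - b * W r)) * ∫ x, exp (a * V x + b * W x) := by
        gcongr
    _ = _ := by ring

theorem tendsto_gibbsMean_self_atBot (hV : IsOrlicz V) (hW : IsOrlicz W) (hb : b ≤ 0) :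
    Tendsto (fun a => gibbsMean V W V a b) atBot (𝓝 0) := by
  refine tendsto_order.2
    ⟨fun R hR => .of_forall fun _ => hR.trans_le (gibbsMean_self_nonneg hV.nonneg), fun R hR => ?_⟩
  obtain ⟨r, hVr, hr⟩ : ∃ r, V r < R ∧ 0 < r :=
    (((hV.continuous.tendsto 0).eventually (gt_mem_nhds (by rwa [hV.apply_zero]))).filter_mono
      nhdsWithin_le_nhds |>.and self_mem_nhdsWithin).exists (f := 𝓝[>] 0)
  obtain ⟨v, hrv, hvR⟩ := exists_between hVr
  have hlim : Tendsto (fun a => v + (∫ x, V x * exp (-V x)) / (2 * r) *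
      exp (a * (v - V r) + (v - b * W r))) atBot (𝓝 v) := by
    have : Tendsto (fun a => a * (v - V r) + (v - b * W r)) atBot atBot :=
      tendsto_atBot_add_const_right _ _ (tendsto_id.atBot_mul_const (sub_pos.2 hrv))
    simpa using tendsto_const_nhds.add ((tendsto_exp_atBot.comp this).const_mul _)
  filter_upwards [hlim.eventually (gt_mem_nhds hvR), eventually_le_atBot (-1)]
    with a hlt ha
  exact (gibbsMean_self_le hV hW ha hb hr ((hV.nonneg r).trans hrv.le)).trans_lt hlt

theorem strictMonoOn_gibbsMean_self (hV : IsOrlicz V) (hWc : Continuous W) (hW₀ : ∀ x, 0 ≤ W x)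
    (hWC : ∀ x, W x ≤ C * (1 + V x)) {b : ℝ} (hb : b ≤ 0) :
    StrictMonoOn (fun a => gibbsMean V W V a b) (Iio 0) := by
  intro a₁ ha₁ a₂ ha₂ hlt
  have hne : ¬ ∃ c, ∀ x, (a₂ - a₁) * V x + (b - b) * W x = c := by
    rintro ⟨c, hc⟩
    have h₀ := hc 0
    have h₁ := hc 1
    simp only [sub_self, zero_mul, add_zero, hV.apply_zero, mul_zero] at h₀ h₁
    exact (mul_pos (sub_pos.2 hlt) hV.apply_one_pos).ne' (h₁.trans h₀.symm)
  have := linComb_gibbsMean_lt hV hWc hW₀ hWC ha₁ hb ha₂ hb hne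
  simp only [sub_self, zero_mul, add_zero] at this
  exact lt_of_mul_lt_mul_left this (sub_pos.2 hlt).le

theorem gibbsMean_lt_of_gibbsMean_eq (hV : IsOrlicz V) (hW : IsOrlicz W)
    (hli : ∀ a b : ℝ, (∀ x, a * V x + b * W x = 0) → a = 0 ∧ b = 0)
    (hWC : ∀ x, W x ≤ C * (1 + V x)) {a b a₀ : ℝ} (ha : a < 0) (hb : b < 0) (ha₀ : a₀ < 0)
    (h : gibbsMean V W V a b = gibbsMean V W V a₀ 0) :
    gibbsMean V W W a b < gibbsMean V W W a₀ 0 := by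
  have hne : ¬ ∃ c, ∀ x, (a₀ - a) * V x + (0 - b) * W x = c := by
    rintro ⟨c, hc⟩
    have hc₀ : c = 0 := by simpa [hV.apply_zero, hW.apply_zero] using (hc 0).symm
    exact hb.ne (by linarith [(hli _ _ (hc₀ ▸ hc)).2])
  have := linComb_gibbsMean_lt hV hW.continuous hW.nonneg hWC ha hb.le ha₀ le_rfl hne
  rw [h] at this
  exact lt_of_mul_lt_mul_left (by linarith) (by linarith : (0 : ℝ) ≤ 0 - b)

theorem exists_continuousOn_gibbsMean_self_eq (hV : IsOrlicz V) (hW : IsOrlicz W)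
    (hWC : ∀ x, W x ≤ C * (1 + V x)) {α₀ : ℝ} (hα₀ : α₀ < 0) (hR : 0 < gibbsMean V W V α₀ 0) :
    ∃ β₀ < 0, ∃ g : ℝ → ℝ, g 0 = α₀ ∧ ContinuousOn g (Icc β₀ 0) ∧
      ∀ b ∈ Icc β₀ 0, g b < 0 ∧ gibbsMean V W V (g b) b = gibbsMean V W V α₀ 0 := by
  set R := gibbsMean V W V α₀ 0
  have hEV := continuousOn_gibbsMean hV hW.continuous hW.nonneg hV.continuous (C := 1)
    (fun x => by simp [abs_of_nonneg (hV.nonneg x)])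
  have hmono {b : ℝ} (hb : b ≤ 0) := strictMonoOn_gibbsMean_self hV hW.continuous hW.nonneg hWC hb
  have hslice_a {b : ℝ} (hb : b ≤ 0) : ContinuousOn (fun a => gibbsMean V W V a b) (Iio 0) :=
    hEV.comp (Continuous.continuousOn (by fun_prop : Continuous fun a : ℝ => (a, b)))
      fun a ha => ⟨ha, hb⟩
  have hslice_b {a : ℝ} (ha : a < 0) : ContinuousOn (gibbsMean V W V a) (Iic 0) :=
    hEV.comp (Continuous.continuousOn (by fun_prop : Continuous fun b : ℝ => (a, b)))
      fun b hb => ⟨ha, hb⟩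
  obtain ⟨β₀, hβ₀, hupp⟩ : ∃ β₀ < 0, Icc β₀ 0 ⊆ {b | R < gibbsMean V W V (α₀ / 2) b} :=
    mem_nhdsLE_iff_exists_Icc_subset.1 <|
      (hslice_b (by linarith) 0 (mem_Iic.2 le_rfl)).eventually
        (lt_mem_nhds (hmono le_rfl hα₀ (by linarith : α₀ / 2 < 0) (by linarith)))
  obtain ⟨g, hg, hgc⟩ := exists_continuousOn_of_strictMonoOn_of_eq (s := Icc β₀ 0) (c := 0)
    (fun b hb => hmono hb.2) (fun b hb => hslice_a hb.2)
    (fun a ha => (hslice_b ha).mono fun b hb => hb.2)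
    (fun b hb => ((eventually_lt_atBot 0).and
      ((tendsto_gibbsMean_self_atBot hV hW hb.2).eventually (gt_mem_nhds hR))).exists)
    (fun b hb => ⟨α₀ / 2, by linarith, hupp hb⟩)
  have hg₀ := hg 0 ⟨hβ₀.le, le_rfl⟩
  exact ⟨β₀, hβ₀, g, (hmono le_rfl).injOn hg₀.1 hα₀ hg₀.2, hgc, hg⟩

theorem exists_gibbsMean_eq (hV : IsOrlicz V) (hW : IsOrlicz W)
    (hli : ∀ a b : ℝ, (∀ x, a * V x + b * W x = 0) → a = 0 ∧ b = 0)
    (hWC : ∀ x, W x ≤ C * (1 + V x)) {α₀ : ℝ} (hα₀ : α₀ < 0) (hR : 0 < gibbsMean V W V α₀ 0) :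
    ∃ ε > 0, ∀ t ∈ Ioo (gibbsMean V W W α₀ 0 - ε) (gibbsMean V W W α₀ 0), ∃ α β,
      α < 0 ∧ β < 0 ∧ gibbsMean V W V α β = gibbsMean V W V α₀ 0 ∧ gibbsMean V W W α β = t := by
  obtain ⟨β₀, hβ₀, g, hg₀, hgc, hg⟩ := exists_continuousOn_gibbsMean_self_eq hV hW hWC hα₀ hR
  have hEW := continuousOn_gibbsMean hV hW.continuous hW.nonneg hW.continuous
    (fun x => (abs_of_nonneg (hW.nonneg x)).trans_le (hWC x))
  have ht : ContinuousOn (fun b => gibbsMean V W W (g b) b) (Icc β₀ 0) :=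
    hEW.comp (hgc.prodMk continuousOn_id) fun b hb => ⟨(hg b hb).1, hb.2⟩
  have hβ₀_mem : β₀ ∈ Icc β₀ 0 := ⟨le_rfl, hβ₀.le⟩
  have hlt : gibbsMean V W W (g β₀) β₀ < gibbsMean V W W α₀ 0 :=
    gibbsMean_lt_of_gibbsMean_eq hV hW hli hWC (hg β₀ hβ₀_mem).1 hβ₀ hα₀ (hg β₀ hβ₀_mem).2
  refine ⟨_, sub_pos.2 hlt, fun t htm => ?_⟩
  obtain ⟨b, hb, rfl⟩ := intermediate_value_Ioo hβ₀.le ht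
    ⟨by simpa using htm.1, by simpa [hg₀] using htm.2⟩
  obtain ⟨hgb, hEV⟩ := hg b (Ioo_subset_Icc_self hb)
  exact ⟨g b, b, hgb, hb.2, hEV, rfl⟩

end GibbsMean

theorem gradient_surjectivity_below_m
    (V W : ℝ → ℝ)
    (hVsym : ∀ x, V (-x) = V x) (hVconv : ConvexOn ℝ Set.univ V)
    (hVnonneg : ∀ x, 0 ≤ V x) (hVzero : ∀ x, V x = 0 ↔ x = 0)
    (hWsym : ∀ x, W (-x) = W x) (hWconv : ConvexOn ℝ Set.univ W)
    (hWnonneg : ∀ x, 0 ≤ W x) (hWzero : ∀ x, W x = 0 ↔ x = 0)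
    (hli : ∀ a b : ℝ, (∀ x, a * V x + b * W x = 0) → a = 0 ∧ b = 0)
    (hliminf : 0 < Filter.liminf (fun x => V x / W x) Filter.atTop)
    (R : ℝ) (hR : 0 < R)
    (αs : ℝ) (hαs : αs < 0)
    (Z m : ℝ)
    (hZ : Z = ∫ x, Real.exp (αs * V x))
    (hmean : (∫ x, V x * Real.exp (αs * V x)) / Z = R)
    (hm : m = (∫ x, W x * Real.exp (αs * V x)) / Z) :
    ∃ ε > (0 : ℝ), ∀ t ∈ Set.Ioo (m - ε) m, ∃ α β : ℝ,
      α < 0 ∧ β < 0 ∧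
      Integrable (fun x => Real.exp (α * V x + β * W x)) ∧
      (∫ x, V x * Real.exp (α * V x + β * W x)) /
        (∫ x, Real.exp (α * V x + β * W x)) = R ∧
      (∫ x, W x * Real.exp (α * V x + β * W x)) /
        (∫ x, Real.exp (α * V x + β * W x)) = t := by
  have hV : IsOrlicz V := ⟨hVsym, hVconv, hVnonneg, hVzero⟩
  have hW : IsOrlicz W := ⟨hWsym, hWconv, hWnonneg, hWzero⟩
  have hRα : gibbsMean V W V αs 0 = R := by simpa [gibbsMean, ← hZ] using hmean
  have hmα : gibbsMean V W W αs 0 = m := by simpa [gibbsMean, ← hZ] using hm.symm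
  obtain ⟨C, hWC⟩ := hV.exists_le_mul_one_add_of_liminf_pos hW hliminf
  obtain ⟨ε, hε, h⟩ := exists_gibbsMean_eq hV hW hli hWC hαs (hRα ▸ hR)
  refine ⟨ε, hε, fun t ht => ?_⟩
  obtain ⟨α, β, hα, hβ, hVαβ, hWαβ⟩ := h t (hmα ▸ ht)
  exact ⟨α, β, hα, hβ, integrable_exp_mul_add hV hW.continuous hW.nonneg hα hβ.le,
    hVαβ.trans hRα, hWαβ⟩
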